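/- Let n be a natural number, let U be a subspace of GF(2)^n, let b = dim(U ∩ U^⊥), and let v_1, …, v_b be a basis of U ∩ U^⊥. Suppose j_1, …, j_b ∈ {1, …, n} are indices such that for each i the j_i-th coordinate of v_i equals 1 and the j_i-th coordinate of v_k equals 0 for all k < i. Then the images of the standard basis vectors e_{j_1}, …, e_{j_b} under the quotient map form a basis of the quotient space GF(2)^n / (U + U^⊥). -/

import Mathlib

/-!
A vector `w` of the bicycle space `U ⊓ perp U` is orthogonal to all of `U ⊔ perp U`, so
`x ↦ w ⬝ᵥ x` descends to a functional on the quotient. Pairing the vectors `v k` with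
the `e_{j i}` gives a unitriangular matrix, whence the `e_{j i}` are independent in the
quotient. They also span it, since `dim (U ⊔ perp U) = dim U + dim (perp U) - b = n - b`.
-/

/-- The orthogonal complement of a subspace `U ⊆ GF(2)^E` with respect to the
standard bilinear form `⟨u, w⟩ = ∑ e, u e * w e`. -/
def perp {E : Type*} [Fintype E] (U : Submodule (ZMod 2) (E → ZMod 2)) :
    Submodule (ZMod 2) (E → ZMod 2) where
  carrier := {w | ∀ u ∈ U, ∑ e, u e * w e = 0}
  add_mem' := by
    intro a b ha hb u hu
    simp only [Set.mem_setOf_eq] at ha hb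
    simp only [Set.mem_setOf_eq, Pi.add_apply, mul_add, Finset.sum_add_distrib,
      ha u hu, hb u hu, add_zero]
  zero_mem' := by
    intro u hu
    simp
  smul_mem' := by
    intro c a ha u hu
    simp only [Set.mem_setOf_eq] at ha ⊢
    have h : ∑ e, u e * (c • a) e = c * ∑ e, u e * a e := by
      rw [Finset.mul_sum]
      refine Finset.sum_congr rfl fun e _ => ?_
      simp only [Pi.smul_apply, smul_eq_mul]
      ring
    rw [h, ha u hu, mul_zero]

open Module

theorem linearIndependent_of_dual_triangular {ι R M : Type*} [Fintype ι] [LinearOrder ι]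
    [CommRing R] [AddCommGroup M] [Module R M] {x : ι → M} (f : ι → Dual R M)
    (hdiag : ∀ i, f i (x i) = 1) (hlt : ∀ i k, k < i → f k (x i) = 0) :
    LinearIndependent R x := by
  rw [Fintype.linearIndependent_iff]
  intro g hg k
  induction k using WellFoundedLT.induction with
  | ind k ih =>
    have hpair : ∑ i, g i * f k (x i) = 0 := by
      simpa only [map_sum, map_smul, smul_eq_mul, map_zero] using congrArg (f k) hg
    rwa [Finset.sum_eq_single k (fun i _ hik => ?_) (by simp), hdiag, mul_one] at hpair
    rcases hik.lt_or_gt with hik | hik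
    · rw [ih i hik, zero_mul]
    · rw [hlt i k hik, mul_zero]

section Perp

variable {E : Type*} [Fintype E]

theorem perp_eq_dualCoannihilator [DecidableEq E] (U : Submodule (ZMod 2) (E → ZMod 2)) :
    perp U = (U.map (dotProductEquiv (ZMod 2) E).toLinearMap).dualCoannihilator := by
  ext w
  simp only [Submodule.mem_dualCoannihilator, Submodule.mem_map, forall_exists_index, and_imp]
  exact ⟨fun hw _ u hu hφ => hφ ▸ hw u hu, fun hw u hu => hw _ u hu rfl⟩

theorem finrank_add_finrank_perp (U : Submodule (ZMod 2) (E → ZMod 2)) :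
    finrank (ZMod 2) U + finrank (ZMod 2) (perp U) = Fintype.card E := by
  classical
  rw [perp_eq_dualCoannihilator, ← LinearEquiv.finrank_map_eq (dotProductEquiv (ZMod 2) E),
    Subspace.finrank_add_finrank_dualCoannihilator_eq, finrank_fintype_fun_eq_card]

theorem finrank_quotient_sup_perp (U : Submodule (ZMod 2) (E → ZMod 2)) :
    finrank (ZMod 2) ((E → ZMod 2) ⧸ (U ⊔ perp U)) = finrank (ZMod 2) ↥(U ⊓ perp U) := by
  have hquot := Submodule.finrank_quotient_add_finrank (U ⊔ perp U)
  have hsup := Submodule.finrank_sup_add_finrank_inf_eq U (perp U)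
  have hperp := finrank_add_finrank_perp U
  rw [finrank_fintype_fun_eq_card] at hquot
  omega

theorem dotProduct_eq_zero_of_mem_inf_perp_of_mem_sup_perp
    {U : Submodule (ZMod 2) (E → ZMod 2)} {w x : E → ZMod 2}
    (hw : w ∈ U ⊓ perp U) (hx : x ∈ U ⊔ perp U) : w ⬝ᵥ x = 0 := by
  obtain ⟨u, hu, p, hp, rfl⟩ := Submodule.mem_sup.mp hx
  have hwu : w ⬝ᵥ u = 0 := dotProduct_comm u w ▸ hw.2 u hu
  have hwp : w ⬝ᵥ p = 0 := hp w hw.1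
  rw [dotProduct_add, hwu, hwp, add_zero]

theorem exists_dual_quotient_sup_perp_eq_dotProduct {U : Submodule (ZMod 2) (E → ZMod 2)}
    {w : E → ZMod 2} (hw : w ∈ U ⊓ perp U) :
    ∃ f : Dual (ZMod 2) ((E → ZMod 2) ⧸ (U ⊔ perp U)),
      ∀ x, f (Submodule.Quotient.mk x) = w ⬝ᵥ x :=
  ⟨(U ⊔ perp U).liftQ (dotProductBilin (ZMod 2) (ZMod 2) w) fun _ hx =>
      dotProduct_eq_zero_of_mem_inf_perp_of_mem_sup_perp hw hx,
    fun _ => rfl⟩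

end Perp

theorem stmt_7_general (n : ℕ) (U : Submodule (ZMod 2) (Fin n → ZMod 2))
    (b : ℕ) (hb : b = Module.finrank (ZMod 2) ↥(U ⊓ perp U))
    (v : Fin b → (Fin n → ZMod 2))
    (hmem : ∀ i, v i ∈ U ⊓ perp U)
    (j : Fin b → Fin n)
    (hj1 : ∀ i, v i (j i) = 1)
    (hj0 : ∀ i k, k < i → v k (j i) = 0) :
    LinearIndependent (ZMod 2) (fun i : Fin b =>
      Submodule.Quotient.mk (p := U ⊔ perp U) (Pi.single (j i) (1 : ZMod 2))) ∧
    Submodule.span (ZMod 2) (Set.range fun i : Fin b =>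
      Submodule.Quotient.mk (p := U ⊔ perp U) (Pi.single (j i) (1 : ZMod 2)))
      = ⊤ := by
  choose f hf using fun k => exists_dual_quotient_sup_perp_eq_dotProduct (hmem k)
  have hli : LinearIndependent (ZMod 2) (fun i : Fin b =>
      Submodule.Quotient.mk (p := U ⊔ perp U) (Pi.single (j i) (1 : ZMod 2))) :=
    linearIndependent_of_dual_triangular f
      (fun i => by rw [hf, dotProduct_single_one, hj1])
      (fun i k hki => by rw [hf, dotProduct_single_one, hj0 i k hki])
  refine ⟨hli, hli.span_eq_top_of_card_eq_finrank' ?_⟩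
  rw [Fintype.card_fin, finrank_quotient_sup_perp, hb]

/-- Let `U ⊆ GF(2)^n`, `b = dim (U ⊓ U^⊥)`, and let
`v_1, …, v_b` be a basis of the bicycle space `U ⊓ U^⊥`. If `j_1, …, j_b` are
coordinates such that `v_i` has a `1` in coordinate `j_i` while `v_k` has a `0`
there for all `k < i`, then the images of the standard basis vectors
`e_{j_1}, …, e_{j_b}` under the quotient map form a basis of
`GF(2)^n / (U + U^⊥)`. -/
theorem stmt_7 (n : ℕ) (U : Submodule (ZMod 2) (Fin n → ZMod 2))
    (b : ℕ) (hb : b = Module.finrank (ZMod 2) ↥(U ⊓ perp U))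
    (v : Fin b → (Fin n → ZMod 2))
    (hmem : ∀ i, v i ∈ U ⊓ perp U)
    (hind : LinearIndependent (ZMod 2) v)
    (hspan : Submodule.span (ZMod 2) (Set.range v) = U ⊓ perp U)
    (j : Fin b → Fin n)
    (hj1 : ∀ i, v i (j i) = 1)
    (hj0 : ∀ i k, k < i → v k (j i) = 0) :
    LinearIndependent (ZMod 2) (fun i : Fin b =>
      Submodule.Quotient.mk (p := U ⊔ perp U) (Pi.single (j i) (1 : ZMod 2))) ∧
    Submodule.span (ZMod 2) (Set.range fun i : Fin b =>
      Submodule.Quotient.mk (p := U ⊔ perp U) (Pi.single (j i) (1 : ZMod 2)))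
      = ⊤ :=
  stmt_7_general n U b hb v hmem j hj1 hj0
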